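/- (Sufficiency direction of the equivalence theorem, discrete version.) Let g(ω) = Σ_{i,j} p_{i,j} inf_{θ∈Θ_j} Σ_{k=1}^n ω_k I_{i,j}(k,θ) on the simplex Δ with p_{i,j} ≥ 0. Suppose ω* ∈ Δ is such that for each (i,j) with p_{i,j} > 0 the infimum at ω* is attained at some θ̂_{i,j}, and define Ψ(k) = Σ_{i,j} p_{i,j} I_{i,j}(k, θ̂_{i,j}). If Ψ(k) ≤ g(ω*) for all k = 1,…,n, then ω* maximizes g over Δ. -/

import Mathlib

/-!
Bounding each infimum by its value at the fixed parameter `θ̂_{i,j}` bounds `g` on the simplex by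
the linear function `ω ↦ Σ_k ω_k Ψ(k)`, and a convex combination of the `Ψ(k)` is at most
`max_k Ψ(k) ≤ g(ω*)`.
-/

open Finset

lemma sum_mul_le_of_mem_stdSimplex {κ : Type*} [Fintype κ] {ω f : κ → ℝ} {c : ℝ}
    (hω : ω ∈ stdSimplex ℝ κ) (hf : ∀ k, f k ≤ c) : ∑ k, ω k * f k ≤ c :=
  calc ∑ k, ω k * f k ≤ ∑ k, ω k * c :=
        sum_le_sum fun k _ => mul_le_mul_of_nonneg_left (hf k) (hω.1 k)
    _ = c := by rw [← sum_mul, hω.2, one_mul]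

lemma sum_sum_mul_sum_mul_comm {R ι κ μ : Type*} [CommSemiring R]
    [Fintype ι] [Fintype κ] [Fintype μ] (p : ι → κ → R) (ω : μ → R) (a : ι → κ → μ → R) :
    ∑ i, ∑ j, p i j * ∑ k, ω k * a i j k = ∑ k, ω k * ∑ i, ∑ j, p i j * a i j k := by
  simp only [mul_sum, mul_left_comm (p _ _)]
  rw [sum_comm (s := univ (α := μ))]
  exact sum_congr rfl fun i _ => sum_comm

lemma sum_sum_mul_ciInf_le {ι κ : Type*} [Fintype ι] [Fintype κ] {Θ : κ → Type*}
    {p : ι → κ → ℝ} (hp : ∀ i j, 0 ≤ p i j) {F : (i : ι) → (j : κ) → Θ j → ℝ}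
    (hF : ∀ i j, BddBelow (Set.range (F i j))) (θ : (i : ι) → (j : κ) → Θ j) :
    ∑ i, ∑ j, p i j * ⨅ t, F i j t ≤ ∑ i, ∑ j, p i j * F i j (θ i j) :=
  sum_le_sum fun i _ => sum_le_sum fun j _ =>
    mul_le_mul_of_nonneg_left (ciInf_le (hF i j) (θ i j)) (hp i j)

theorem equivalence_theorem_sufficiency_general {n : ℕ} {ι : Type*} [Fintype ι]
    (Θ : ι → Type*)
    (I : (i j : ι) → Fin n → Θ j → ℝ)
    (p : ι → ι → ℝ) (hp : ∀ i j, 0 ≤ p i j)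
    (g : (Fin n → ℝ) → ℝ)
    (hg : ∀ ω, g ω = ∑ i : ι, ∑ j : ι, p i j * ⨅ θ : Θ j, ∑ k, ω k * I i j k θ)
    (hbdd : ∀ ω ∈ stdSimplex ℝ (Fin n), ∀ i j : ι,
      BddBelow (Set.range fun θ : Θ j => ∑ k, ω k * I i j k θ))
    (ωs : Fin n → ℝ)
    (θhat : (i j : ι) → Θ j)
    (Ψ : Fin n → ℝ)
    (hΨ : ∀ k, Ψ k = ∑ i : ι, ∑ j : ι, p i j * I i j k (θhat i j))
    (hineq : ∀ k, Ψ k ≤ g ωs) :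
    ∀ ω ∈ stdSimplex ℝ (Fin n), g ω ≤ g ωs := by
  intro ω hω
  calc g ω ≤ ∑ i, ∑ j, p i j * ∑ k, ω k * I i j k (θhat i j) := by
        rw [hg]
        exact sum_sum_mul_ciInf_le hp (hbdd ω hω) θhat
    _ = ∑ k, ω k * Ψ k := by
        simp only [hΨ, sum_sum_mul_sum_mul_comm]
    _ ≤ g ωs := sum_mul_le_of_mem_stdSimplex hω hineq

/-- Sufficiency direction of the equivalence theorem (discrete version): if the directional
function `Ψ(k) = Σ_{i,j} p_{i,j} I_{i,j}(k, θ̂_{i,j})` satisfies `Ψ(k) ≤ g(ω*)` for all `k`,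
where `θ̂_{i,j}` attains the infimum defining `g` at `ω*`, then `ω*` maximizes `g` over the
simplex. -/
theorem equivalence_theorem_sufficiency {n : ℕ} {ι : Type*} [Fintype ι]
    (Θ : ι → Type*) [∀ j, Nonempty (Θ j)]
    (I : (i j : ι) → Fin n → Θ j → ℝ)
    (p : ι → ι → ℝ) (hp : ∀ i j, 0 ≤ p i j)
    (g : (Fin n → ℝ) → ℝ)
    (hg : ∀ ω, g ω = ∑ i : ι, ∑ j : ι, p i j * ⨅ θ : Θ j, ∑ k, ω k * I i j k θ)
    (hbdd : ∀ ω ∈ stdSimplex ℝ (Fin n), ∀ i j : ι,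
      BddBelow (Set.range fun θ : Θ j => ∑ k, ω k * I i j k θ))
    (ωs : Fin n → ℝ) (hωs : ωs ∈ stdSimplex ℝ (Fin n))
    (θhat : (i j : ι) → Θ j)
    (hatt : ∀ i j, 0 < p i j →
      IsLeast (Set.range fun θ : Θ j => ∑ k, ωs k * I i j k θ) (∑ k, ωs k * I i j k (θhat i j)))
    (Ψ : Fin n → ℝ)
    (hΨ : ∀ k, Ψ k = ∑ i : ι, ∑ j : ι, p i j * I i j k (θhat i j))
    (hineq : ∀ k, Ψ k ≤ g ωs) :
    ∀ ω ∈ stdSimplex ℝ (Fin n), g ω ≤ g ωs :=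
  equivalence_theorem_sufficiency_general Θ I p hp g hg hbdd ωs θhat Ψ hΨ hineq
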